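/- Let p ≥ 5 be a prime and let H_p be the real-valued function H_p(t) := ±(i^{-ε}) e^{-iπpt} f_p(e^{2πit}) (with the normalization making it real). Then there are at least (p−3)/2 values of k ∈ {0, 1, ..., p−1} for which H_p has a zero in the open interval (k/p, (k+1)/p). -/

import Mathlib

open Real

/-- The Fekete polynomial evaluated at `z`. -/
noncomputable def fekete (p : ℕ) [Fact p.Prime] (z : ℂ) : ℂ :=
  ∑ k ∈ Finset.range p, ((legendreSym p k : ℤ) : ℂ) * z ^ k

/-- The normalized real-valued function `H_p`. -/
noncomputable def H (p : ℕ) [Fact p.Prime] (t : ℝ) : ℂ :=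
  (if p % 4 = 1 then (1 : ℂ) else -Complex.I) *
    (Complex.exp (-(π * p * t) * Complex.I) * fekete p (Complex.exp (2 * π * t * Complex.I)))

private lemma sum_zmod {M : Type*} [AddCommMonoid M] {n : ℕ} [NeZero n] (f : ZMod n → M) :
    ∑ a : ZMod n, f a = ∑ a ∈ Finset.range n, f a := by
  refine (Finset.sum_nbij' (fun a : ZMod n => a.val) (fun a : ℕ => (a : ZMod n))
    (fun a _ => Finset.mem_range.mpr a.val_lt) (fun a _ => Finset.mem_univ _)
    (fun a _ => ZMod.natCast_rightInverse a) (fun a ha => ZMod.val_cast_of_lt (Finset.mem_range.mp ha))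
    (fun a _ => ?_))
  rw [ZMod.natCast_rightInverse a]

section prime

variable (p : ℕ) [Fact p.Prime]

private lemma hp_pos : 0 < p := (Fact.out : p.Prime).pos

/-- the standard additive character of `ZMod p` in `ℂ`. -/
private noncomputable def psi : AddChar (ZMod p) ℂ :=
  AddChar.zmodChar p (ζ := Complex.exp (2 * π * Complex.I / p))
    (Complex.isPrimitiveRoot_exp p (hp_pos p).ne').pow_eq_one

private lemma psi_primitive : (psi p).IsPrimitive :=
  AddChar.zmodChar_primitive_of_primitive_root p (Complex.isPrimitiveRoot_exp p (hp_pos p).ne')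

/-- the complex-valued quadratic character. -/
private noncomputable def qchar : MulChar (ZMod p) ℂ :=
  (quadraticChar (ZMod p)).ringHomComp (Int.castRingHom ℂ)

private lemma qchar_nat (k : ℕ) : qchar p ((k : ZMod p)) = ((legendreSym p k : ℤ) : ℂ) := by
  rw [qchar, MulChar.ringHomComp_apply, legendreSym]
  norm_num

variable {p}

private lemma legendre_cast_ne (hp : 5 ≤ p) {k : ℕ} (hk : ¬ (p ∣ k)) :
    ((k : ℤ) : ZMod p) ≠ 0 := by
  rw [Int.cast_natCast, Ne, ZMod.natCast_eq_zero_iff]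
  exact hk

/-- `fekete` at `p`-th roots of unity is a (shifted) Gauss sum. -/
private lemma fekete_eq (k : ℕ) :
    fekete p (Complex.exp (2 * (π : ℂ) * Complex.ofReal ((k : ℝ) / p) * Complex.I)) =
      gaussSum (qchar p) ((psi p).mulShift (k : ZMod p)) := by
  have hp0 : (p : ℂ) ≠ 0 := Nat.cast_ne_zero.mpr (hp_pos p).ne'
  have hz : Complex.exp (2 * (π : ℂ) * Complex.ofReal ((k : ℝ) / p) * Complex.I) =
      Complex.exp (2 * π * Complex.I / p) ^ k := by
    rw [← Complex.exp_nat_mul]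
    congr 1
    push_cast
    field_simp
  rw [gaussSum, sum_zmod (fun a => qchar p a * (psi p).mulShift (k : ZMod p) a)]
  unfold fekete
  refine Finset.sum_congr rfl fun a _ => ?_
  rw [qchar_nat, AddChar.mulShift_apply, ← Nat.cast_mul, psi,
    AddChar.zmodChar_apply', hz, ← pow_mul, mul_comm k a]

private lemma legendre_vals (hp : 5 ≤ p) {k : ℕ} (hk : ¬ (p ∣ k)) :
    legendreSym p k = 1 ∨ legendreSym p k = -1 :=
  legendreSym.eq_one_or_neg_one p (legendre_cast_ne hp hk)

/-- the value of `H` at `k/p`. -/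
private lemma H_val (hp : 5 ≤ p) {k : ℕ} (hk : ¬ (p ∣ k)) :
    H p ((k : ℝ) / p) = (if p % 4 = 1 then (1 : ℂ) else -Complex.I) *
      ((-1) ^ k * ((legendreSym p k : ℤ) : ℂ) * gaussSum (qchar p) (psi p)) := by
  have hp0 : (p : ℂ) ≠ 0 := Nat.cast_ne_zero.mpr (hp_pos p).ne'
  have hexp : Complex.exp (-((π : ℂ) * (p : ℂ) * Complex.ofReal ((k : ℝ) / p)) * Complex.I) =
      (-1 : ℂ) ^ k := by
    have h1 : (-((π : ℂ) * (p : ℂ) * Complex.ofReal ((k : ℝ) / p)) * Complex.I : ℂ) =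
        -((k : ℂ) * ((π : ℂ) * Complex.I)) := by
      push_cast
      field_simp
    rw [h1, Complex.exp_neg, Complex.exp_nat_mul, Complex.exp_pi_mul_I]
    rw [← inv_pow, inv_neg, inv_one]
  have hunit : IsUnit ((k : ZMod p)) := by
    have := legendre_cast_ne hp hk
    rw [Int.cast_natCast] at this
    exact this.isUnit
  have hms := gaussSum_mulShift (qchar p) (psi p) hunit.unit
  rw [IsUnit.unit_spec] at hms
  have hq : qchar p ((k : ZMod p)) = ((legendreSym p k : ℤ) : ℂ) := qchar_nat p k
  have hgs : gaussSum (qchar p) ((psi p).mulShift (k : ZMod p)) =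
      ((legendreSym p k : ℤ) : ℂ) * gaussSum (qchar p) (psi p) := by
    rcases legendre_vals hp hk with h | h
    · rw [hq, h] at hms
      rw [h]
      push_cast at hms ⊢
      linear_combination hms
    · rw [hq, h] at hms
      rw [h]
      push_cast at hms ⊢
      linear_combination -hms
  unfold H
  rw [fekete_eq, hgs, hexp]
  ring

private lemma p_mod_four (hp : 5 ≤ p) : p % 4 = 1 ∨ p % 4 = 3 := by
  have hodd : Odd p := (Fact.out : p.Prime).odd_of_ne_two (by omega)
  rw [Nat.odd_iff] at hodd
  omega

private lemma qchar_ne_one (hp : 5 ≤ p) : qchar p ≠ 1 := by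
  rw [qchar, MulChar.ringHomComp_ne_one_iff Int.cast_injective]
  exact quadraticChar_ne_one (by rw [ZMod.ringChar_zmod_n]; omega)

/-- The normalized square of the Gauss sum. -/
private lemma csq_Gsq (hp : 5 ≤ p) :
    (if p % 4 = 1 then (1 : ℂ) else -Complex.I) ^ 2 * gaussSum (qchar p) (psi p) ^ 2 = p := by
  have hsq : gaussSum (qchar p) (psi p) ^ 2 = qchar p (-1) * p := by
    have := gaussSum_sq (χ := qchar p) (qchar_ne_one hp)
      ((quadraticChar_isQuadratic (ZMod p)).comp _) (psi_primitive p)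
    rwa [ZMod.card] at this
  have hneg : qchar p (-1) = ((legendreSym p (-1) : ℤ) : ℂ) := by
    rw [qchar, MulChar.ringHomComp_apply, legendreSym]
    norm_num
  have h4 : legendreSym p (-1) = ZMod.χ₄ p := legendreSym.at_neg_one (by omega)
  rcases p_mod_four hp with h | h
  · rw [if_pos h, hsq, hneg, h4, ZMod.χ₄_nat_one_mod_four h]
    norm_num
  · rw [if_neg (by omega), hsq, hneg, h4, ZMod.χ₄_nat_three_mod_four h]
    push_cast
    ring_nf
    rw [Complex.I_sq]
    ring

private lemma legendre_congr {a b : ℤ} (h : ((a : ZMod p)) = (b : ZMod p)) :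
    legendreSym p a = legendreSym p b := by
  simp only [legendreSym]
  rw [h]

private lemma legendre_flip {a : ℕ} (ha : a ≤ p) :
    legendreSym p ((p - a : ℕ)) = legendreSym p (-1) * legendreSym p a := by
  have h1 : (((p - a : ℕ) : ℤ) : ZMod p) = ((-1 * a : ℤ) : ZMod p) := by
    have : ((p - a : ℕ) : ℤ) = (p : ℤ) - a := by omega
    rw [this]
    push_cast
    simp [ZMod.natCast_self]
  rw [legendre_congr h1, legendreSym.mul]

private lemma neg_one_ne (hp : 5 ≤ p) : (((-1 : ℤ) : ZMod p)) ≠ 0 := by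
  have : Nontrivial (ZMod p) := ZMod.nontrivial_iff.mpr (by omega)
  simp only [Int.cast_neg, Int.cast_one]
  exact neg_ne_zero.mpr one_ne_zero

private lemma H_real (hp : 5 ≤ p) (t : ℝ) : (starRingEnd ℂ) (H p t) = H p t := by
  have hε := legendreSym.eq_one_or_neg_one p (a := -1) (neg_one_ne hp)
  unfold H fekete
  set z : ℂ := Complex.exp (2 * ↑π * ↑t * Complex.I) with hzdef
  have hz0 : z ≠ 0 := Complex.exp_ne_zero _
  have hzinv : (starRingEnd ℂ) z = z⁻¹ := by
    have harg : (starRingEnd ℂ) (2 * (π : ℂ) * (t : ℂ) * Complex.I) =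
        -(2 * (π : ℂ) * (t : ℂ) * Complex.I) := by
      simp only [map_mul, Complex.conj_I, Complex.conj_ofReal, map_ofNat]
      ring
    rw [hzdef, ← Complex.exp_conj, harg, Complex.exp_neg]
  have hzp : z ^ p = Complex.exp (2 * ↑π * ↑t * ↑p * Complex.I) := by
    rw [hzdef, ← Complex.exp_nat_mul]
    congr 1
    ring
  have h0 : ∀ g : ℕ → ℂ, (∀ a, legendreSym p (a : ℕ) = 0 → g a = 0) →
      ∑ a ∈ Finset.range p, g a = ∑ a ∈ Finset.Ico 1 p, g a := by
    intro g hg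
    refine (Finset.sum_subset
      (fun x hx => by simp only [Finset.mem_Ico, Finset.mem_range] at hx ⊢; omega) ?_).symm
    intro x hx hnx
    simp only [Finset.mem_Ico, Finset.mem_range] at hx hnx
    have hx0 : x = 0 := by omega
    subst hx0
    exact hg 0 ((legendreSym.eq_zero_iff p _).mpr (by simp))
  have key : ∑ a ∈ Finset.range p, (starRingEnd ℂ) (((legendreSym p a : ℤ) : ℂ) * z ^ a)
      = ((legendreSym p (-1) : ℤ) : ℂ) * (z ^ p)⁻¹ *
        ∑ a ∈ Finset.range p, ((legendreSym p a : ℤ) : ℂ) * z ^ a := by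
    rw [Finset.mul_sum]
    rw [h0 _ (fun a ha => by rw [ha]; simp), h0 _ (fun a ha => by rw [ha]; simp)]
    refine Finset.sum_nbij' (fun a => p - a) (fun a => p - a) ?_ ?_ ?_ ?_ ?_
    · intro a ha; simp only [Finset.mem_Ico] at ha ⊢; omega
    · intro a ha; simp only [Finset.mem_Ico] at ha ⊢; omega
    · intro a ha; simp only [Finset.mem_Ico] at ha; show p - (p - a) = a; omega
    · intro a ha; simp only [Finset.mem_Ico] at ha; show p - (p - a) = a; omega
    · intro a ha
      simp only [Finset.mem_Ico] at ha
      rw [map_mul, map_pow, hzinv, map_intCast, legendre_flip (le_of_lt ha.2)]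
      rw [pow_sub₀ z hz0 (le_of_lt ha.2), inv_pow]
      rcases hε with h | h <;> rw [h] <;> push_cast <;> field_simp
  rw [map_mul, map_mul, map_sum, key]
  have hconjexp : (starRingEnd ℂ) (Complex.exp (-(↑π * ↑p * ↑t) * Complex.I)) =
      Complex.exp ((↑π * ↑p * ↑t) * Complex.I) := by
    have harg : (starRingEnd ℂ) (-((π : ℂ) * (p : ℂ) * (t : ℂ)) * Complex.I) =
        ((π : ℂ) * (p : ℂ) * (t : ℂ)) * Complex.I := by
      simp only [map_mul, map_neg, Complex.conj_I, Complex.conj_ofReal, map_natCast]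
      ring
    rw [← Complex.exp_conj, harg]
  rw [hconjexp]
  have hcomb : Complex.exp ((↑π * ↑p * ↑t) * Complex.I) * (z ^ p)⁻¹ =
      Complex.exp (-(↑π * ↑p * ↑t) * Complex.I) := by
    rw [hzp, ← Complex.exp_neg, ← Complex.exp_add]
    congr 1
    ring
  rcases p_mod_four hp with h | h
  · have he : legendreSym p (-1) = 1 := by
      rw [legendreSym.at_neg_one (by omega), ZMod.χ₄_nat_one_mod_four h]
    rw [he, if_pos h]
    simp only [map_one, Int.cast_one, Complex.ofReal_one]
    push_cast
    linear_combination (∑ a ∈ Finset.range p, ((legendreSym p a : ℤ) : ℂ) * z ^ a) * hcomb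
  · have he : legendreSym p (-1) = -1 := by
      rw [legendreSym.at_neg_one (by omega), ZMod.χ₄_nat_three_mod_four h]
    rw [he, if_neg (by omega)]
    simp only [map_neg, Complex.conj_I]
    push_cast
    linear_combination (-Complex.I * ∑ a ∈ Finset.range p, ((legendreSym p a : ℤ) : ℂ) * z ^ a) * hcomb

private lemma H_continuous : Continuous (H p) := by
  unfold H fekete
  refine continuous_const.mul (Continuous.mul ?_ ?_)
  · exact Complex.continuous_exp.comp (by fun_prop)
  · refine continuous_finset_sum _ fun i _ => ?_
    exact continuous_const.mul ((Complex.continuous_exp.comp (by fun_prop)).pow i)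

/-- the character-sum identity over `ZMod p`. -/
private lemma char_sum (hp : 5 ≤ p) :
    ∑ x : ZMod p, quadraticChar (ZMod p) x * quadraticChar (ZMod p) (x + 1) = -1 := by
  set χ := quadraticChar (ZMod p) with hχ
  have hne : χ ≠ 1 := quadraticChar_ne_one (by rw [ZMod.ringChar_zmod_n]; omega)
  have hj := jacobiSum_nontrivial_inv hne
  rw [(quadraticChar_isQuadratic (ZMod p)).inv] at hj
  have hre : ∑ x : ZMod p, χ x * χ (x + 1) = ∑ x : ZMod p, χ (-x) * χ (-x + 1) :=
    Fintype.sum_equiv (Equiv.neg (ZMod p)) _ _ (fun x => by simp)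
  have hχneg : ∀ x : ZMod p, χ (-x) = χ (-1) * χ x := by
    intro x
    rw [← map_mul, neg_one_mul]
  have hsq : χ (-1) * χ (-1) = 1 := by
    rw [← map_mul, neg_one_mul, neg_neg, map_one]
  calc ∑ x : ZMod p, χ x * χ (x + 1)
      = ∑ x : ZMod p, χ (-1) * (χ x * χ (1 - x)) := by
        rw [hre]
        refine Finset.sum_congr rfl fun x _ => ?_
        rw [hχneg x, show (-x + 1 : ZMod p) = 1 - x by ring]
        ring
    _ = χ (-1) * jacobiSum χ χ := by rw [← Finset.mul_sum, jacobiSum]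
    _ = -1 := by rw [hj, mul_neg, hsq]

/-- the corresponding sum over `ℕ`. -/
private lemma legendre_sum (hp : 5 ≤ p) :
    ∑ k ∈ Finset.Ico 1 (p - 1), legendreSym p k * legendreSym p ((k + 1 : ℕ)) = -1 := by
  have h1 : ∑ k ∈ Finset.range p, legendreSym p k * legendreSym p ((k + 1 : ℕ)) = -1 := by
    rw [← char_sum hp]
    rw [sum_zmod (fun x : ZMod p => quadraticChar (ZMod p) x * quadraticChar (ZMod p) (x + 1))]
    refine Finset.sum_congr rfl fun a _ => ?_
    simp only [legendreSym]
    push_cast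
    norm_num
  rw [← h1]
  refine Finset.sum_subset (fun x hx => by
    simp only [Finset.mem_Ico, Finset.mem_range] at hx ⊢; omega) ?_
  intro x hx hnx
  simp only [Finset.mem_Ico, Finset.mem_range] at hx hnx
  rcases (by omega : x = 0 ∨ x = p - 1) with h | h
  · subst h
    have h2 : legendreSym p ((0 : ℕ)) = 0 := by
      apply (legendreSym.eq_zero_iff p _).mpr
      norm_num
    rw [h2, zero_mul]
  · subst h
    have h2 : legendreSym p ((p - 1 + 1 : ℕ)) = 0 := by
      apply (legendreSym.eq_zero_iff p _).mpr
      have hpe : (p - 1 + 1 : ℕ) = p := by omega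
      rw [hpe]
      push_cast
      exact ZMod.natCast_self p
    rw [h2, mul_zero]

private lemma count_S (hp : 5 ≤ p) :
    ((Finset.Ico 1 (p - 1)).filter
      (fun k : ℕ => legendreSym p k = legendreSym p ((k + 1 : ℕ)))).card = (p - 3) / 2 := by
  classical
  set s := Finset.Ico 1 (p - 1) with hs
  set P : ℕ → Prop := fun k : ℕ => legendreSym p k = legendreSym p ((k + 1 : ℕ)) with hP
  have hnd : ∀ k ∈ s, ¬ (p ∣ k) ∧ ¬ (p ∣ (k + 1)) := by
    intro k hk
    simp only [hs, Finset.mem_Ico] at hk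
    constructor <;> intro hd <;> have := Nat.le_of_dvd (by omega) hd <;> omega
  have hsum := Finset.sum_filter_add_sum_filter_not s P
    (fun k => legendreSym p k * legendreSym p ((k + 1 : ℕ)))
  rw [legendre_sum hp] at hsum
  have h1 : ∑ k ∈ s.filter P, legendreSym p k * legendreSym p ((k + 1 : ℕ))
      = (s.filter P).card := by
    rw [Finset.card_eq_sum_ones, Nat.cast_sum]
    refine Finset.sum_congr rfl fun k hk => ?_
    have hk' := Finset.mem_filter.mp hk
    have hP' : legendreSym p k = legendreSym p ((k + 1 : ℕ)) := hk'.2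
    rcases legendre_vals hp (hnd k hk'.1).1 with h | h <;>
      rw [← hP', h] <;> norm_num
  have h2 : ∑ k ∈ s.filter (fun k => ¬ P k), legendreSym p k * legendreSym p ((k + 1 : ℕ))
      = -(s.filter (fun k => ¬ P k)).card := by
    rw [Finset.card_eq_sum_ones, Nat.cast_sum, ← Finset.sum_neg_distrib]
    refine Finset.sum_congr rfl fun k hk => ?_
    have hk' := Finset.mem_filter.mp hk
    have hne : ¬ legendreSym p k = legendreSym p ((k + 1 : ℕ)) := hk'.2
    rcases legendre_vals hp (hnd k hk'.1).1 with h | h <;>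
      rcases legendre_vals hp (hnd k hk'.1).2 with h' | h'
    · exact absurd (h.trans h'.symm) hne
    · rw [h, h']; norm_num
    · rw [h, h']; norm_num
    · exact absurd (h.trans h'.symm) hne
  have hcards : (s.filter P).card + (s.filter (fun k => ¬ P k)).card = p - 2 := by
    rw [Finset.card_filter_add_card_filter_not, hs, Nat.card_Ico]
    omega
  rw [h1, h2] at hsum
  show (s.filter P).card = (p - 3) / 2
  omega

end prime

theorem stmt12 (p : ℕ) [Fact p.Prime] (hp : 5 ≤ p) :
    ∃ S : Finset ℕ, S ⊆ Finset.range p ∧ (p - 3) / 2 ≤ S.card ∧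
      ∀ k ∈ S, ∃ t ∈ Set.Ioo ((k : ℝ) / p) (((k : ℝ) + 1) / p), H p t = 0 := by
  classical
  have hp0 : (0 : ℝ) < p := by positivity
  refine ⟨(Finset.Ico 1 (p - 1)).filter
      (fun k => legendreSym p k = legendreSym p ((k + 1 : ℕ))), ?_, ?_, ?_⟩
  · intro x hx
    have := (Finset.mem_filter.mp hx).1
    simp only [Finset.mem_Ico] at this
    simp only [Finset.mem_range]
    omega
  · exact (count_S hp).ge
  · intro k hk
    have hk1 := Finset.mem_filter.mp hk
    have hkI := Finset.mem_Ico.mp hk1.1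
    have hkP : legendreSym p ((k + 1 : ℕ)) = legendreSym p k := hk1.2.symm
    have hdk : ¬ (p ∣ k) := fun hd => by have := Nat.le_of_dvd (by omega) hd; omega
    have hdk1 : ¬ (p ∣ (k + 1)) := fun hd => by have := Nat.le_of_dvd (by omega) hd; omega
    set a : ℝ := (k : ℝ) / p with hadef
    set b : ℝ := ((k : ℝ) + 1) / p with hbdef
    have hab' : b = ((k + 1 : ℕ) : ℝ) / p := by rw [hbdef]; push_cast; ring
    have hprod : H p a * H p b = -(p : ℂ) := by
      rw [hadef, hab', H_val hp hdk, H_val hp hdk1, hkP]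
      have hcs := csq_Gsq (p := p) hp
      have hpow : ((-1 : ℂ)) ^ (k * 2) = 1 := by
        rw [mul_comm, pow_mul]
        norm_num
      rcases legendre_vals hp hdk with h | h <;> rw [h] <;> push_cast <;>
        linear_combination (-1 : ℂ) * hcs -
          ((if p % 4 = 1 then (1 : ℂ) else -Complex.I) ^ 2 *
            gaussSum (qchar p) (psi p) ^ 2) * hpow
    have hia : (H p a).im = 0 := Complex.conj_eq_iff_im.mp (H_real hp _)
    have hib : (H p b).im = 0 := Complex.conj_eq_iff_im.mp (H_real hp _)
    have hre : (H p a).re * (H p b).re = -(p : ℝ) := by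
      have := congrArg Complex.re hprod
      rw [Complex.mul_re, hia, hib] at this
      simpa using this
    have hf : Continuous fun t => (H p t).re := Complex.continuous_re.comp H_continuous
    have hab : a < b := by
      rw [hadef, hbdef, div_lt_div_iff_of_pos_right hp0]
      linarith
    have hfa0 : (H p a).re ≠ 0 := by
      intro h0
      rw [h0, zero_mul] at hre
      linarith
    rcases lt_or_gt_of_ne hfa0 with hlt | hgt
    · have hfb : 0 < (H p b).re := by nlinarith
      obtain ⟨t, htIoo, hft⟩ := intermediate_value_Ioo hab.le hf.continuousOn
        (show (0 : ℝ) ∈ Set.Ioo ((H p a).re) ((H p b).re) from ⟨hlt, hfb⟩)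
      refine ⟨t, htIoo, ?_⟩
      rw [Complex.ext_iff]
      exact ⟨by simpa using hft, by simpa using Complex.conj_eq_iff_im.mp (H_real hp t)⟩
    · have hfb : (H p b).re < 0 := by nlinarith
      obtain ⟨t, htIoo, hft⟩ := intermediate_value_Ioo' hab.le hf.continuousOn
        (show (0 : ℝ) ∈ Set.Ioo ((H p b).re) ((H p a).re) from ⟨hfb, hgt⟩)
      refine ⟨t, htIoo, ?_⟩
      rw [Complex.ext_iff]
      exact ⟨by simpa using hft, by simpa using Complex.conj_eq_iff_im.mp (H_real hp t)⟩
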